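/- arXiv:1901.09314 — 6 statements merged into one kernel-verified Lean document; each statement's English description precedes it below -/
import Mathlib

section
/- If ℓ : ℝ → ℝ is a symmetric loss (ℓ(z)+ℓ(−z)=K for all z) and η > 1/2, then the set of minimizers over α ∈ ℝ of the conditional risk η ℓ(α) + (1−η) ℓ(−α) equals the set of minimizers of ℓ; if η < 1/2 it equals the set of maximizers of ℓ. -/
theorem conditional_risk_minimizers (ℓ : ℝ → ℝ) (K : ℝ)
    (hsym : ∀ z : ℝ, ℓ z + ℓ (-z) = K)
    (η : ℝ) (hη : η ∈ Set.Icc (0:ℝ) 1) :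
    (η > 1/2 →
      {α : ℝ | ∀ β : ℝ, η * ℓ α + (1 - η) * ℓ (-α) ≤ η * ℓ β + (1 - η) * ℓ (-β)}
        = {α : ℝ | ∀ β : ℝ, ℓ α ≤ ℓ β}) ∧
    (η < 1/2 →
      {α : ℝ | ∀ β : ℝ, η * ℓ α + (1 - η) * ℓ (-α) ≤ η * ℓ β + (1 - η) * ℓ (-β)}
        = {α : ℝ | ∀ β : ℝ, ℓ β ≤ ℓ α}) := by
  have hneg : ∀ z : ℝ, ℓ (-z) = K - ℓ z := fun z => by
    have := hsym z; linarith
  constructor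
  · intro h
    ext α
    simp only [Set.mem_setOf_eq, hneg]
    constructor
    · intro hα β
      have := hα β
      nlinarith
    · intro hα β
      have := hα β
      nlinarith
  · intro h
    ext α
    simp only [Set.mem_setOf_eq, hneg]
    constructor
    · intro hα β
      have := hα β
      nlinarith
    · intro hα β
      have := hα β
      nlinarith
end

section
/- If ℓ : ℝ → ℝ is non-increasing, satisfies ℓ(z)+ℓ(−z)=K for all z, is differentiable at 0 with ℓ'(0) < 0, and is bounded below, then inf_{α>0} ℓ(α) < inf_{α≤0} ℓ(α). -/
theorem nonincreasing_symmetric_calibrated (ℓ : ℝ → ℝ) (K : ℝ)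
    (hanti : Antitone ℓ)
    (hsym : ∀ z : ℝ, ℓ z + ℓ (-z) = K)
    (d : ℝ) (hd : HasDerivAt ℓ d 0) (hd0 : d < 0)
    (hbdd : BddBelow (Set.range ℓ)) :
    sInf (ℓ '' {α : ℝ | 0 < α}) < sInf (ℓ '' {α : ℝ | α ≤ 0}) := by
  -- find x > 0 with ℓ x < ℓ 0
  have hslope := hasDerivAt_iff_tendsto_slope.mp hd
  have hev : ∀ᶠ x in nhdsWithin 0 {(0:ℝ)}ᶜ, slope ℓ 0 x < 0 :=
    hslope.eventually_lt_const hd0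
  have hev' : ∀ᶠ x in nhdsWithin 0 (Set.Ioi (0:ℝ)), slope ℓ 0 x < 0 :=
    hev.filter_mono (nhdsWithin_mono 0 (fun x hx => ne_of_gt hx))
  obtain ⟨x, hx0, hx⟩ := (hev'.and self_mem_nhdsWithin).exists
  have hxpos : (0:ℝ) < x := hx
  have hℓx : ℓ x < ℓ 0 := by
    have h := hx0
    rw [slope_def_field, div_lt_iff₀ (by simpa using hxpos)] at h
    simpa using sub_neg.mp (by linarith)
  have hbdd1 : BddBelow (ℓ '' {α : ℝ | 0 < α}) :=
    hbdd.mono (Set.image_subset_range _ _)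
  have h1 : sInf (ℓ '' {α : ℝ | 0 < α}) ≤ ℓ x :=
    csInf_le hbdd1 ⟨x, hxpos, rfl⟩
  have h2 : sInf (ℓ '' {α : ℝ | α ≤ 0}) = ℓ 0 := by
    apply le_antisymm
    · exact csInf_le (hbdd.mono (Set.image_subset_range _ _)) ⟨0, by simp, rfl⟩
    · exact le_csInf ⟨ℓ 0, 0, by simp, rfl⟩ (by rintro _ ⟨a, ha, rfl⟩; exact hanti ha)
  rw [h2]
  exact lt_of_le_of_lt h1 hℓx
end

section
/- For a symmetric loss ℓ with ℓ(z)+ℓ(−z)=K and η ∈ [0,1], the quantity H⁻(η) − H(η) := inf_{α:α(2η−1)≤0} C_η(α) − inf_{α∈ℝ} C_η(α) equals |2η−1| · (inf_{α≤0} ℓ(α) − inf_{α∈ℝ} ℓ(α)), where C_η(α) = η ℓ(α) + (1−η) ℓ(−α). -/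
lemma affine_sInf (c b : ℝ) (hc : 0 ≤ c) (s : Set ℝ) (hs : s.Nonempty)
    (hb : BddBelow s) :
    sInf ((fun t : ℝ => c * t + b) '' s) = c * sInf s + b := by
  have hmono : Monotone (fun t : ℝ => c * t + b) := by
    intro x y hxy
    dsimp
    nlinarith
  have hcont : ContinuousAt (fun t : ℝ => c * t + b) (sInf s) := by
    fun_prop
  exact (hmono.map_csInf_of_continuousAt hcont hs hb).symm

theorem H_gap_symmetric (ℓ : ℝ → ℝ) (K : ℝ)
    (hbdd : BddBelow (Set.range ℓ))
    (hsym : ∀ z : ℝ, ℓ z + ℓ (-z) = K)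
    (η : ℝ) (hη : η ∈ Set.Icc (0:ℝ) 1) :
    sInf ((fun α : ℝ => η * ℓ α + (1 - η) * ℓ (-α)) '' {α : ℝ | α * (2 * η - 1) ≤ 0})
      - sInf ((fun α : ℝ => η * ℓ α + (1 - η) * ℓ (-α)) '' Set.univ)
    = |2 * η - 1| * (sInf (ℓ '' {α : ℝ | α ≤ 0}) - ⨅ α : ℝ, ℓ α) := by
  obtain ⟨hη0, hη1⟩ := hη
  have hiInf : (⨅ α : ℝ, ℓ α) = sInf (Set.range ℓ) := rfl
  have hrange : ℓ '' Set.univ = Set.range ℓ := Set.image_univ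
  have hbddneg : BddBelow (ℓ '' {α : ℝ | α ≤ 0}) :=
    hbdd.mono (Set.image_subset_range _ _)
  have hneneg : (ℓ '' {α : ℝ | α ≤ 0}).Nonempty :=
    ⟨ℓ 0, ⟨0, le_refl (0:ℝ), rfl⟩⟩
  have hneuniv : (Set.range ℓ).Nonempty := ⟨ℓ 0, 0, rfl⟩
  rcases lt_trichotomy η (1/2) with hlt | heq | hgt
  · -- η < 1/2 : constraint is α ≥ 0, use ℓ(α) = K - ℓ(-α)
    have hc : (0:ℝ) ≤ 1 - 2*η := by linarith
    have hset : {α : ℝ | α * (2 * η - 1) ≤ 0} = {α : ℝ | 0 ≤ α} := by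
      ext x
      simp only [Set.mem_setOf_eq]
      constructor
      · intro h; nlinarith
      · intro h; nlinarith
    have hfun : ∀ α : ℝ, η * ℓ α + (1 - η) * ℓ (-α)
        = (1 - 2*η) * ℓ (-α) + η * K := by
      intro α
      have := hsym α
      nlinarith [hsym α]
    have himg : ∀ S : Set ℝ, (fun α : ℝ => η * ℓ α + (1 - η) * ℓ (-α)) '' S
        = (fun t : ℝ => (1 - 2*η) * t + η * K) '' (ℓ '' (Neg.neg '' S)) := by
      intro S
      rw [← Set.image_comp, ← Set.image_comp]
      exact Set.image_congr fun a _ => hfun a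
    have hnegset : Neg.neg '' {α : ℝ | 0 ≤ α} = {α : ℝ | α ≤ 0} := by
      ext x
      simp only [Set.mem_image, Set.mem_setOf_eq]
      constructor
      · rintro ⟨a, ha, rfl⟩; linarith
      · intro h; exact ⟨-x, by linarith, by ring⟩
    have hneguniv : Neg.neg '' (Set.univ : Set ℝ) = Set.univ := by
      ext x
      simp only [Set.mem_image, Set.mem_univ, iff_true]
      exact ⟨-x, trivial, by ring⟩
    rw [hset, himg, himg, hnegset, hneguniv, hrange,
      affine_sInf _ _ hc _ hneneg hbddneg,
      affine_sInf _ _ hc _ hneuniv hbdd, hiInf,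
      abs_of_neg (by linarith : 2*η - 1 < 0)]
    ring
  · -- η = 1/2
    subst heq
    have hfun : ∀ α : ℝ, (1/2 : ℝ) * ℓ α + (1 - 1/2) * ℓ (-α) = K / 2 := by
      intro α
      have := hsym α
      linarith
    have himg : ∀ S : Set ℝ, S.Nonempty →
        (fun α : ℝ => (1/2:ℝ) * ℓ α + (1 - 1/2) * ℓ (-α)) '' S = {K/2} := by
      intro S hS
      have : (fun α : ℝ => (1/2:ℝ) * ℓ α + (1 - 1/2) * ℓ (-α)) '' S
          = (fun _ : ℝ => K/2) '' S := Set.image_congr fun a _ => hfun a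
      rw [this, Set.Nonempty.image_const hS]
    rw [himg _ ⟨0, by norm_num⟩, himg _ ⟨0, Set.mem_univ 0⟩]
    norm_num
  · -- η > 1/2 : constraint is α ≤ 0
    have hc : (0:ℝ) ≤ 2*η - 1 := by linarith
    have hset : {α : ℝ | α * (2 * η - 1) ≤ 0} = {α : ℝ | α ≤ 0} := by
      ext x
      simp only [Set.mem_setOf_eq]
      constructor
      · intro h; nlinarith
      · intro h; nlinarith
    have hfun : ∀ α : ℝ, η * ℓ α + (1 - η) * ℓ (-α)
        = (2*η - 1) * ℓ α + (1 - η) * K := by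
      intro α
      nlinarith [hsym α]
    have himg : ∀ S : Set ℝ, (fun α : ℝ => η * ℓ α + (1 - η) * ℓ (-α)) '' S
        = (fun t : ℝ => (2*η - 1) * t + (1 - η) * K) '' (ℓ '' S) := by
      intro S
      rw [← Set.image_comp]
      exact Set.image_congr fun a _ => hfun a
    rw [hset, himg, himg, hrange,
      affine_sInf _ _ hc _ hneneg hbddneg,
      affine_sInf _ _ hc _ hneuniv hbdd, hiInf,
      abs_of_pos (by linarith : (0:ℝ) < 2*η - 1)]
    ring
end

section
/- There is no function ℓ : ℝ → ℝ that is simultaneously nonnegative, satisfies ℓ(z)+ℓ(−z)=K for all z with K a constant, classification-calibrated in the sense that inf_{α>0} ℓ(α) < inf_{α≤0} ℓ(α), and convex. -/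
/-! Symmetry and nonnegativity give `ℓ ≤ K`. A convex function bounded above is constant: writing
`x` as a convex combination `t • z + (1 - t) • y`, convexity gives `f x ≤ f y + t * (sup f - f y)`,
and `t → 0⁺`. Hence both infima in the calibration condition equal `ℓ 0`. -/

open Set Filter Topology

theorem ConvexOn.apply_le_of_bddAbove {E : Type*} [AddCommGroup E] [Module ℝ E] {f : E → ℝ}
    (hf : ConvexOn ℝ univ f) (hbdd : BddAbove (range f)) (x y : E) : f x ≤ f y := by
  obtain ⟨K, hK⟩ := hbdd
  have hchord : ∀ t ∈ Ioo (0 : ℝ) 1, f x ≤ f y + t * (K - f y) := by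
    rintro t ⟨ht₀, ht₁⟩
    have hx : t • (y + t⁻¹ • (x - y)) + (1 - t) • y = x := by
      rw [smul_add, smul_smul, mul_inv_cancel₀ ht₀.ne', one_smul]
      module
    calc f x ≤ t * f (y + t⁻¹ • (x - y)) + (1 - t) * f y := by
          simpa only [hx, smul_eq_mul] using
            hf.2 (mem_univ (y + t⁻¹ • (x - y))) (mem_univ y) ht₀.le
              (sub_nonneg.2 ht₁.le) (add_sub_cancel t 1)
      _ ≤ t * K + (1 - t) * f y := by gcongr; exact hK (mem_range_self _)
      _ = f y + t * (K - f y) := by ring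
  have hlim : Tendsto (fun t : ℝ ↦ f y + t * (K - f y)) (𝓝[>] 0) (𝓝 (f y)) :=
    tendsto_nhdsWithin_of_tendsto_nhds <| (by fun_prop : Continuous _).tendsto' _ _ (by simp)
  exact ge_of_tendsto hlim (eventually_of_mem (Ioo_mem_nhdsGT one_pos) hchord)

theorem ConvexOn.apply_eq_of_bddAbove {E : Type*} [AddCommGroup E] [Module ℝ E] {f : E → ℝ}
    (hf : ConvexOn ℝ univ f) (hbdd : BddAbove (range f)) (x y : E) : f x = f y :=
  (hf.apply_le_of_bddAbove hbdd x y).antisymm (hf.apply_le_of_bddAbove hbdd y x)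

theorem no_nonneg_convex_calibrated_symmetric :
    ¬ ∃ (ℓ : ℝ → ℝ) (K : ℝ),
      (∀ z : ℝ, 0 ≤ ℓ z) ∧
      (∀ z : ℝ, ℓ z + ℓ (-z) = K) ∧
      (sInf (ℓ '' {α : ℝ | 0 < α}) < sInf (ℓ '' {α : ℝ | α ≤ 0})) ∧
      ConvexOn ℝ Set.univ ℓ := by
  rintro ⟨ℓ, K, hnonneg, hsymm, hcalib, hconvex⟩
  have hbdd : BddAbove (range ℓ) :=
    ⟨K, forall_mem_range.2 fun z ↦ by linarith [hsymm z, hnonneg (-z)]⟩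
  have hconst : ℓ = fun _ ↦ ℓ 0 := funext fun z ↦ hconvex.apply_eq_of_bddAbove hbdd z 0
  have hpos : {α : ℝ | 0 < α}.Nonempty := nonempty_Ioi
  have hnonpos : {α : ℝ | α ≤ 0}.Nonempty := nonempty_Iic
  rw [hconst, hpos.image_const, hnonpos.image_const] at hcalib
  exact hcalib.false
end

section
/- Let ℓ be any bounded measurable loss and define γ(x) = ℓ(g(x)) + ℓ(−g(x)). Then the corrupted BER risk decomposes as R_BER-Corr(g) = (π−π')·R_BER(g) + ½[π' E_P[γ(x)] + (1−π) E_N[γ(x)]]. -/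
open MeasureTheory

/-- BER-type risk: ½(E_μ[ℓ(g(x))] + E_ν[ℓ(−g(x))]). -/
noncomputable def berRisk {X : Type*} [MeasurableSpace X]
    (μ ν : Measure X) (ℓ : ℝ → ℝ) (g : X → ℝ) : ℝ :=
  (1 / 2) * ((∫ x, ℓ (g x) ∂μ) + (∫ x, ℓ (-(g x)) ∂ν))

/-- Corrupted marginal π P + (1−π) N. -/
noncomputable def corruptMeasure {X : Type*} [MeasurableSpace X]
    (P N : Measure X) (π : ℝ) : Measure X :=
  ENNReal.ofReal π • P + ENNReal.ofReal (1 - π) • N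

lemma integral_corrupt {X : Type*} [MeasurableSpace X]
    (P N : Measure X) (f : X → ℝ)
    (hfP : Integrable f P) (hfN : Integrable f N)
    (a : ℝ) (h0 : 0 ≤ a) (h1 : a ≤ 1) :
    ∫ x, f x ∂(corruptMeasure P N a)
      = a * ∫ x, f x ∂P + (1 - a) * ∫ x, f x ∂N := by
  rw [corruptMeasure, integral_add_measure
      (hfP.smul_measure ENNReal.ofReal_ne_top)
      (hfN.smul_measure ENNReal.ofReal_ne_top),
    integral_smul_measure, integral_smul_measure,
    ENNReal.toReal_ofReal h0, ENNReal.toReal_ofReal (by linarith)]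
  simp only [smul_eq_mul]

theorem ber_corrupted_decomposition {X : Type*} [MeasurableSpace X]
    (P N : Measure X) [IsProbabilityMeasure P] [IsProbabilityMeasure N]
    (ℓ : ℝ → ℝ) (hmeas : Measurable ℓ) (C : ℝ) (hbdd : ∀ z : ℝ, |ℓ z| ≤ C)
    (π π' : ℝ) (hπ1 : π ≤ 1) (hlt : π' < π) (hπ'0 : 0 ≤ π')
    (g : X → ℝ) (hg : Measurable g) :
    berRisk (corruptMeasure P N π) (corruptMeasure P N π') ℓ g
      = (π - π') * berRisk P N ℓ g
        + (1 / 2) * (π' * (∫ x, (ℓ (g x) + ℓ (-(g x))) ∂P)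
            + (1 - π) * (∫ x, (ℓ (g x) + ℓ (-(g x))) ∂N)) := by
  have hm1 : Measurable fun x => ℓ (g x) := hmeas.comp hg
  have hm2 : Measurable fun x => ℓ (-(g x)) := hmeas.comp hg.neg
  have int1 : ∀ (μ : Measure X) [IsProbabilityMeasure μ],
      Integrable (fun x => ℓ (g x)) μ := fun μ _ =>
    Integrable.mono' (integrable_const C) hm1.aestronglyMeasurable
      (ae_of_all _ fun x => hbdd _)
  have int2 : ∀ (μ : Measure X) [IsProbabilityMeasure μ],
      Integrable (fun x => ℓ (-(g x))) μ := fun μ _ =>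
    Integrable.mono' (integrable_const C) hm2.aestronglyMeasurable
      (ae_of_all _ fun x => hbdd _)
  have h1 := integral_corrupt P N _ (int1 P) (int1 N) π (by linarith) hπ1
  have h2 := integral_corrupt P N _ (int2 P) (int2 N) π' hπ'0 (by linarith)
  rw [berRisk, berRisk, h1, h2,
    integral_add (int1 P) (int2 P), integral_add (int1 N) (int2 N)]
  ring
end

section
/- Let ℓ be any bounded measurable loss, f(x,x') = g(x)−g(x'), and γ(x,x') = ℓ(f(x,x')) + ℓ(f(x',x)). Then R_AUC-Corr(g) = (π−π')·R_AUC(g) + (1−π)π'·E_P E_N[γ(x_P, x_N)] + (ππ'/2)·E_{P'} E_P[γ(x_{P'}, x_P)] + ((1−π)(1−π')/2)·E_{N'} E_N[γ(x_{N'}, x_N)], where P' and N' denote independent copies of P and N. -/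
open MeasureTheory

/-- Pairwise AUC risk: E_{x∼μ} E_{x'∼ν} [ℓ(g(x) − g(x'))]. -/
noncomputable def aucRisk {X : Type*} [MeasurableSpace X]
    (μ ν : Measure X) (ℓ : ℝ → ℝ) (g : X → ℝ) : ℝ :=
  ∫ x, ∫ x', ℓ (g x - g x') ∂ν ∂μ

/-- Symmetrized pairwise loss γ(x,x') = ℓ(g(x)−g(x')) + ℓ(g(x')−g(x)). -/
noncomputable def gammaPair (ℓ : ℝ → ℝ) {X : Type*} (g : X → ℝ) (x x' : X) : ℝ :=
  ℓ (g x - g x') + ℓ (g x' - g x)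

section Aux

variable {X : Type*} [MeasurableSpace X]

lemma integrable_of_bdd' {F : X → ℝ} (hF : Measurable F) {C : ℝ} (hb : ∀ x, |F x| ≤ C)
    (μ : Measure X) [IsFiniteMeasure μ] : Integrable F μ :=
  (integrable_const C).mono' hF.aestronglyMeasurable
    (Filter.Eventually.of_forall fun x => by simpa [Real.norm_eq_abs] using hb x)

lemma abs_int_le {F : X → ℝ} {C : ℝ} (hF : Measurable F) (hb : ∀ x, |F x| ≤ C)
    (μ : Measure X) [IsProbabilityMeasure μ] : |∫ x, F x ∂μ| ≤ C := by
  calc |∫ x, F x ∂μ| ≤ ∫ x, |F x| ∂μ := by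
        simpa [Real.norm_eq_abs] using norm_integral_le_integral_norm F (μ := μ)
    _ ≤ ∫ _x, C ∂μ := integral_mono ((integrable_of_bdd' hF hb μ).abs) (integrable_const C)
        fun x => hb x
    _ = C := by simp

lemma integral_corrupt_s19 {F : X → ℝ} (hF : Measurable F) {C : ℝ} (hb : ∀ x, |F x| ≤ C)
    (P N : Measure X) [IsProbabilityMeasure P] [IsProbabilityMeasure N]
    {a : ℝ} (ha : 0 ≤ a) (ha1 : a ≤ 1) :
    ∫ x, F x ∂(corruptMeasure P N a) = a * ∫ x, F x ∂P + (1 - a) * ∫ x, F x ∂N := by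
  have h1 : Integrable F (ENNReal.ofReal a • P) :=
    (integrable_of_bdd' hF hb P).smul_measure ENNReal.ofReal_ne_top
  have h2 : Integrable F (ENNReal.ofReal (1 - a) • N) :=
    (integrable_of_bdd' hF hb N).smul_measure ENNReal.ofReal_ne_top
  rw [corruptMeasure, integral_add_measure h1 h2, integral_smul_measure, integral_smul_measure,
    ENNReal.toReal_ofReal ha, ENNReal.toReal_ofReal (by linarith)]
  simp [smul_eq_mul]

end Aux

theorem auc_corrupted_decomposition {X : Type*} [MeasurableSpace X]
    (P N : Measure X) [IsProbabilityMeasure P] [IsProbabilityMeasure N]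
    (ℓ : ℝ → ℝ) (hmeas : Measurable ℓ) (C : ℝ) (hbdd : ∀ z : ℝ, |ℓ z| ≤ C)
    (π π' : ℝ) (hπ1 : π ≤ 1) (hlt : π' < π) (hπ'0 : 0 ≤ π')
    (g : X → ℝ) (hg : Measurable g) :
    aucRisk (corruptMeasure P N π) (corruptMeasure P N π') ℓ g
      = (π - π') * aucRisk P N ℓ g
        + (1 - π) * π' * (∫ x, ∫ x', gammaPair ℓ g x x' ∂N ∂P)
        + (π * π' / 2) * (∫ x, ∫ x', gammaPair ℓ g x x' ∂P ∂P)
        + ((1 - π) * (1 - π') / 2) * (∫ x, ∫ x', gammaPair ℓ g x x' ∂N ∂N) := by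
  have hπ0 : (0:ℝ) ≤ π := hπ'0.trans hlt.le
  have hπ'1 : π' ≤ 1 := hlt.le.trans hπ1
  have hC0 : 0 ≤ C := (abs_nonneg _).trans (hbdd 0)
  set L : X → X → ℝ := fun x x' => ℓ (g x - g x') with hLdef
  have hLb : ∀ x x', |L x x'| ≤ C := fun x x' => hbdd _
  have hLm1 : ∀ x, Measurable (fun x' => L x x') := fun x =>
    hmeas.comp (measurable_const.sub hg)
  have hLm2 : ∀ x', Measurable (fun x => L x x') := fun x' =>
    hmeas.comp (hg.sub measurable_const)
  have hLmU : Measurable (Function.uncurry L) :=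
    hmeas.comp ((hg.comp measurable_fst).sub (hg.comp measurable_snd))
  have hLmU' : Measurable (fun p : X × X => L p.2 p.1) :=
    hmeas.comp ((hg.comp measurable_snd).sub (hg.comp measurable_fst))
  -- measurability of the partially-integrated functions
  have hA : ∀ (ν : Measure X) [SFinite ν], Measurable (fun x => ∫ x', L x x' ∂ν) := by
    intro ν _
    exact (hLmU.stronglyMeasurable.integral_prod_right').measurable
  have hAb : ∀ (ν : Measure X) [IsProbabilityMeasure ν], ∀ x, |∫ x', L x x' ∂ν| ≤ C :=
    fun ν _ x => abs_int_le (hLm1 x) (hLb x) ν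
  set IPP := ∫ x, ∫ x', L x x' ∂P ∂P with hIPP
  set IPN := ∫ x, ∫ x', L x x' ∂N ∂P with hIPN
  set INP := ∫ x, ∫ x', L x x' ∂P ∂N with hINP
  set INN := ∫ x, ∫ x', L x x' ∂N ∂N with hINN
  -- swap lemma
  have hswap : ∀ (μ ν : Measure X) [IsProbabilityMeasure μ] [IsProbabilityMeasure ν],
      ∫ x, ∫ x', L x' x ∂ν ∂μ = ∫ x, ∫ x', L x x' ∂μ ∂ν := by
    intro μ ν _ _
    exact integral_integral_swap
      ((integrable_of_bdd' hLmU' (fun p => hLb p.2 p.1) (μ.prod ν)))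
  -- inner sum split for gamma integrals
  have hgamma : ∀ (μ ν : Measure X) [IsProbabilityMeasure μ] [IsProbabilityMeasure ν],
      ∫ x, ∫ x', gammaPair ℓ g x x' ∂ν ∂μ
        = (∫ x, ∫ x', L x x' ∂ν ∂μ) + (∫ x, ∫ x', L x' x ∂ν ∂μ) := by
    intro μ ν _ _
    have h1 : ∀ x, ∫ x', gammaPair ℓ g x x' ∂ν
        = (∫ x', L x x' ∂ν) + (∫ x', L x' x ∂ν) := by
      intro x
      exact integral_add (integrable_of_bdd' (hLm1 x) (hLb x) ν)
        (integrable_of_bdd' (hLm2 x) (fun x' => hLb x' x) ν)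
    simp only [h1]
    refine integral_add ?_ ?_
    · exact integrable_of_bdd' (hA ν) (hAb ν) μ
    · refine integrable_of_bdd' (C := C) ?_ ?_ μ
      · exact (hLmU'.stronglyMeasurable.integral_prod_right').measurable
      · exact fun x => abs_int_le (hLm2 x) (fun x' => hLb x' x) ν
  have hgPN : ∫ x, ∫ x', gammaPair ℓ g x x' ∂N ∂P = IPN + INP := by
    rw [hgamma P N, hswap P N]
  have hgPP : ∫ x, ∫ x', gammaPair ℓ g x x' ∂P ∂P = IPP + IPP := by
    rw [hgamma P P, hswap P P]
  have hgNN : ∫ x, ∫ x', gammaPair ℓ g x x' ∂N ∂N = INN + INN := by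
    rw [hgamma N N, hswap N N]
  -- expand the left-hand side
  have hinner : ∀ x, ∫ x', L x x' ∂(corruptMeasure P N π')
      = π' * (∫ x', L x x' ∂P) + (1 - π') * (∫ x', L x x' ∂N) := fun x =>
    integral_corrupt_s19 (hLm1 x) (hLb x) P N hπ'0 hπ'1
  have hlhs : aucRisk (corruptMeasure P N π) (corruptMeasure P N π') ℓ g
      = π * (π' * IPP + (1 - π') * IPN) + (1 - π) * (π' * INP + (1 - π') * INN) := by
    have hFm : Measurable (fun x => π' * (∫ x', L x x' ∂P) + (1 - π') * (∫ x', L x x' ∂N)) :=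
      ((hA P).const_mul π').add ((hA N).const_mul (1 - π'))
    have hFb : ∀ x, |π' * (∫ x', L x x' ∂P) + (1 - π') * (∫ x', L x x' ∂N)| ≤ C := by
      intro x
      calc |π' * (∫ x', L x x' ∂P) + (1 - π') * (∫ x', L x x' ∂N)|
          ≤ |π' * (∫ x', L x x' ∂P)| + |(1 - π') * (∫ x', L x x' ∂N)| := abs_add_le _ _
        _ ≤ π' * C + (1 - π') * C := by
            rw [abs_mul, abs_mul, abs_of_nonneg hπ'0,
              abs_of_nonneg (by linarith : (0:ℝ) ≤ 1 - π')]
            have h1 := hAb P x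
            have h2 := hAb N x
            nlinarith [abs_nonneg (∫ x', L x x' ∂P), abs_nonneg (∫ x', L x x' ∂N)]
        _ = C := by ring
    have hsplitP : ∫ x, (π' * (∫ x', L x x' ∂P) + (1 - π') * (∫ x', L x x' ∂N)) ∂P
        = π' * IPP + (1 - π') * IPN := by
      rw [integral_add (((integrable_of_bdd' (hA P) (hAb P) P)).const_mul π')
        (((integrable_of_bdd' (hA N) (hAb N) P)).const_mul (1 - π')),
        integral_const_mul, integral_const_mul]
    have hsplitN : ∫ x, (π' * (∫ x', L x x' ∂P) + (1 - π') * (∫ x', L x x' ∂N)) ∂N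
        = π' * INP + (1 - π') * INN := by
      rw [integral_add (((integrable_of_bdd' (hA P) (hAb P) N)).const_mul π')
        (((integrable_of_bdd' (hA N) (hAb N) N)).const_mul (1 - π')),
        integral_const_mul, integral_const_mul]
    calc aucRisk (corruptMeasure P N π) (corruptMeasure P N π') ℓ g
        = ∫ x, (π' * (∫ x', L x x' ∂P) + (1 - π') * (∫ x', L x x' ∂N))
            ∂(corruptMeasure P N π) := by
          unfold aucRisk
          exact integral_congr_ae (Filter.Eventually.of_forall hinner)
      _ = π * (π' * IPP + (1 - π') * IPN) + (1 - π) * (π' * INP + (1 - π') * INN) := by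
          rw [integral_corrupt_s19 hFm hFb P N hπ0 hπ1, hsplitP, hsplitN]
  have hauc : aucRisk P N ℓ g = IPN := rfl
  rw [hlhs, hauc, hgPN, hgPP, hgNN]
  ring
end
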